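/- Let m ≥ 1, λ ∈ ℝ^m, θ ∈ (0,π), and let ẑ ∈ ℝ^m be a unit vector. Let ζ² := (λ + iθẑ)·(λ + iθẑ) = |λ|² − θ² + 2iθ(λ·ẑ) ∈ ℂ (complex bilinear dot product), and let s ∈ ℂ be any complex number with s² = ζ² and Im s ≥ 0. Then Re(G(s)) ≥ θ·cot θ, where G(w) = w·coth w = w cosh w / sinh w extended continuously by G(0) = 1 (G is well defined since Im s ≤ θ < π, so sinh s ≠ 0 unless s = 0). Equality holds if and only if λ = 0. -/

import Mathlib

open scoped Real RealInnerProductSpace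

/-!
Write `s = σ + iτ`. Comparing real and imaginary parts of `s²`, and using `|λ·ẑ| ≤ |λ|`, gives
`0 ≤ τ ≤ θ`, and `s = iθ` exactly when `λ = 0`. For `s ≠ 0`,
`Re G(s) = (σ sinh σ cosh σ + τ sin τ cos τ) / (sinh² σ + sin² τ)`,
the mean of `σ coth σ ≥ 1` and `τ cot τ` with weights `sinh² σ` and `sin² τ`. As `x cot x` is
strictly decreasing and less than `1` on `(0, π)`, both are at least `θ cot θ`, one of them strictly
unless `s = iθ`.
-/

/-- G(w) = w coth w = w cosh w / sinh w, extended continuously by G(0) = 1. -/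
noncomputable def Gcoth (w : ℂ) : ℂ :=
  if w = 0 then 1 else w * Complex.cosh w / Complex.sinh w

namespace Real

theorem mul_cos_lt_sin {x : ℝ} (h0 : 0 < x) (hπ : x < π) : x * cos x < sin x := by
  rcases lt_or_ge x (π / 2) with h | h
  · have hcos : 0 < cos x := cos_pos_of_mem_Ioo ⟨by linarith [pi_pos], h⟩
    have htan := lt_tan h0 h
    rwa [tan_eq_sin_div_cos, lt_div_iff₀ hcos] at htan
  · have hcos : cos x ≤ 0 := cos_nonpos_of_pi_div_two_le_of_le h (by linarith [pi_pos])
    nlinarith [sin_pos_of_pos_of_lt_pi h0 hπ]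

theorem mul_cot_lt_one {x : ℝ} (h0 : 0 < x) (hπ : x < π) : x * (cos x / sin x) < 1 := by
  rw [mul_div_assoc', div_lt_one (sin_pos_of_pos_of_lt_pi h0 hπ)]
  exact mul_cos_lt_sin h0 hπ

theorem strictAntiOn_mul_cot : StrictAntiOn (fun x ↦ x * (cos x / sin x)) (Set.Ioo 0 π) := by
  have hsin : ∀ x ∈ Set.Ioo 0 π, sin x ≠ 0 := fun x hx ↦ (sin_pos_of_pos_of_lt_pi hx.1 hx.2).ne'
  have hderiv : ∀ x ∈ Set.Ioo 0 π, HasDerivAt (fun x ↦ x * (cos x / sin x))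
      ((sin x * cos x - x) / sin x ^ 2) x := fun x hx ↦ by
    refine ((hasDerivAt_id' x).mul
      ((hasDerivAt_cos x).div (hasDerivAt_sin x) (hsin x hx))).congr_deriv ?_
    simp only [Pi.div_apply]
    field_simp [hsin x hx]
    linear_combination (-x) * sin_sq_add_cos_sq x
  refine strictAntiOn_of_deriv_neg (convex_Ioo 0 π)
    (fun x hx ↦ (hderiv x hx).continuousAt.continuousWithinAt) fun x hx ↦ ?_
  rw [interior_Ioo] at hx
  rw [(hderiv x hx).deriv]
  have hsc : sin x * cos x < x := by linarith [sin_lt (by linarith [hx.1] : 0 < 2 * x), sin_two_mul x]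
  exact div_neg_of_neg_of_pos (by linarith) (pow_pos (sin_pos_of_pos_of_lt_pi hx.1 hx.2) 2)

theorem mul_cot_mul_sin_sq_le {τ θ : ℝ} (hτ : 0 ≤ τ) (hτθ : τ ≤ θ) (hθ : θ < π) :
    θ * (cos θ / sin θ) * sin τ ^ 2 ≤ τ * sin τ * cos τ := by
  rcases hτ.eq_or_lt with rfl | hτ
  · simp
  have hsin : sin τ ≠ 0 := (sin_pos_of_pos_of_lt_pi hτ (by linarith)).ne'
  calc θ * (cos θ / sin θ) * sin τ ^ 2
      ≤ τ * (cos τ / sin τ) * sin τ ^ 2 := by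
        refine mul_le_mul_of_nonneg_right ?_ (sq_nonneg _)
        exact strictAntiOn_mul_cot.antitoneOn ⟨hτ, by linarith⟩ ⟨by linarith, hθ⟩ hτθ
    _ = τ * sin τ * cos τ := by field_simp

theorem sinh_lt_mul_cosh {x : ℝ} (hx : 0 < x) : sinh x < x * cosh x := by
  have hmono : StrictMonoOn (fun t ↦ t * cosh t - sinh t) (Set.Ici 0) := by
    refine strictMonoOn_of_deriv_pos (convex_Ici 0) (by fun_prop) fun t ht ↦ ?_
    rw [interior_Ici] at ht
    have hd : HasDerivAt (fun t ↦ t * cosh t - sinh t) (t * sinh t) t := by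
      refine (((hasDerivAt_id' t).mul (hasDerivAt_cosh t)).sub (hasDerivAt_sinh t)).congr_deriv ?_
      ring
    rw [hd.deriv]
    exact mul_pos ht (sinh_pos_iff.2 ht)
  simpa using hmono Set.self_mem_Ici (Set.mem_Ici.2 hx.le) hx

theorem sinh_sq_lt_mul_sinh_mul_cosh {x : ℝ} (hx : x ≠ 0) : sinh x ^ 2 < x * sinh x * cosh x := by
  rcases hx.lt_or_gt with h | h
  · have h' := sinh_lt_mul_cosh (neg_pos.2 h)
    rw [sinh_neg, cosh_neg] at h'
    nlinarith [sinh_neg_iff.2 h]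
  · nlinarith [sinh_lt_mul_cosh h, sinh_pos_iff.2 h]

end Real

namespace Complex

theorem sinh_eq_re_add_im (z : ℂ) : sinh z =
    (Real.sinh z.re * Real.cos z.im : ℝ) + (Real.cosh z.re * Real.sin z.im : ℝ) * I := by
  nth_rw 1 [← re_add_im z]
  rw [sinh_add, sinh_mul_I, cosh_mul_I, ← ofReal_sinh, ← ofReal_cosh, ← ofReal_cos, ← ofReal_sin]
  push_cast
  ring

theorem cosh_eq_re_add_im (z : ℂ) : cosh z =
    (Real.cosh z.re * Real.cos z.im : ℝ) + (Real.sinh z.re * Real.sin z.im : ℝ) * I := by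
  nth_rw 1 [← re_add_im z]
  rw [cosh_add, sinh_mul_I, cosh_mul_I, ← ofReal_sinh, ← ofReal_cosh, ← ofReal_cos, ← ofReal_sin]
  push_cast
  ring

theorem normSq_sinh (z : ℂ) : normSq (sinh z) = Real.sinh z.re ^ 2 + Real.sin z.im ^ 2 := by
  rw [sinh_eq_re_add_im, normSq_add_mul_I]
  linear_combination Real.sinh z.re ^ 2 * Real.sin_sq_add_cos_sq z.im
    + Real.sin z.im ^ 2 * Real.cosh_sq_sub_sinh_sq z.re

end Complex

theorem Gcoth_re {s : ℂ} (hs : s ≠ 0) : (Gcoth s).re =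
    (s.re * Real.sinh s.re * Real.cosh s.re + s.im * Real.sin s.im * Real.cos s.im) /
      (Real.sinh s.re ^ 2 + Real.sin s.im ^ 2) := by
  rw [Gcoth, if_neg hs, Complex.div_re, Complex.normSq_sinh, ← add_div]
  congr 1
  rw [Complex.sinh_eq_re_add_im, Complex.cosh_eq_re_add_im]
  simp only [Complex.mul_re, Complex.mul_im, Complex.add_re, Complex.add_im, Complex.ofReal_re,
    Complex.ofReal_im, Complex.I_re, Complex.I_im]
  linear_combination s.re * Real.sinh s.re * Real.cosh s.re * Real.sin_sq_add_cos_sq s.im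
    + s.im * Real.sin s.im * Real.cos s.im * Real.cosh_sq_sub_sinh_sq s.re

theorem Gcoth_ofReal_mul_I_re {θ : ℝ} (hθ : θ ≠ 0) :
    (Gcoth (θ * Complex.I)).re = θ * (Real.cos θ / Real.sin θ) := by
  have : (θ : ℂ) * Complex.I ≠ 0 := mul_ne_zero (Complex.ofReal_ne_zero.2 hθ) Complex.I_ne_zero
  rw [Gcoth, if_neg this, Complex.cosh_mul_I, Complex.sinh_mul_I, mul_right_comm,
    mul_div_mul_right _ _ Complex.I_ne_zero, mul_div_assoc, ← Complex.ofReal_cos,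
    ← Complex.ofReal_sin, ← Complex.ofReal_div, ← Complex.ofReal_mul, Complex.ofReal_re]

theorem mul_cot_lt_Gcoth_re {θ : ℝ} (hθ0 : 0 < θ) (hθπ : θ < π) {s : ℂ} (him0 : 0 ≤ s.im)
    (himθ : s.im ≤ θ) (hs : s ≠ θ * Complex.I) : θ * (Real.cos θ / Real.sin θ) < (Gcoth s).re := by
  have hcot := Real.mul_cot_lt_one hθ0 hθπ
  rcases eq_or_ne s.re 0 with hre | hre
  · have hs_eq : s = (s.im : ℂ) * Complex.I := by apply Complex.ext <;> simp [hre]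
    rcases him0.eq_or_lt with him | him
    · have hs0 : s = 0 := by rw [hs_eq, ← him, Complex.ofReal_zero, zero_mul]
      simpa [hs0, Gcoth] using hcot
    have himθ' : s.im < θ := himθ.lt_of_ne fun h ↦ hs (by rw [hs_eq, h])
    rw [hs_eq, Gcoth_ofReal_mul_I_re him.ne']
    exact Real.strictAntiOn_mul_cot ⟨him, himθ'.trans hθπ⟩ ⟨hθ0, hθπ⟩ himθ'
  · have hsinh : 0 < Real.sinh s.re ^ 2 := by positivity
    rw [Gcoth_re fun h ↦ hre (by simp [h]), lt_div_iff₀ (by positivity)]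
    have := mul_lt_of_lt_one_left hsinh hcot
    linarith [Real.sinh_sq_lt_mul_sinh_mul_cosh hre, Real.mul_cot_mul_sin_sq_le him0 himθ hθπ]

section SqEq

variable {a p θ : ℝ} {s : ℂ}

theorem sq_re_sub_sq_im_eq
    (hs : s ^ 2 = ((a ^ 2 - θ ^ 2 : ℝ) : ℂ) + 2 * (θ : ℂ) * (p : ℝ) * Complex.I) :
    s.re ^ 2 - s.im ^ 2 = a ^ 2 - θ ^ 2 := by
  have h : s.re * s.re - s.im * s.im = a * a - θ * θ := by simpa [sq] using congrArg Complex.re hs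
  linear_combination h

theorem re_mul_im_eq
    (hs : s ^ 2 = ((a ^ 2 - θ ^ 2 : ℝ) : ℂ) + 2 * (θ : ℂ) * (p : ℝ) * Complex.I) :
    s.re * s.im = θ * p := by
  have h : s.re * s.im + s.im * s.re = 2 * θ * p := by simpa [sq] using congrArg Complex.im hs
  linear_combination h / 2

theorem abs_im_le_of_sq_eq (hp : |p| ≤ a) (hθ : 0 ≤ θ)
    (hs : s ^ 2 = ((a ^ 2 - θ ^ 2 : ℝ) : ℂ) + 2 * (θ : ℂ) * (p : ℝ) * Complex.I) :
    |s.im| ≤ θ := by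
  refine abs_le_of_sq_le_sq ?_ hθ
  by_contra! him
  have hpa : p ^ 2 ≤ a ^ 2 := sq_le_sq' (abs_le.1 hp).1 (abs_le.1 hp).2
  have hre : p ^ 2 < s.re ^ 2 := by linarith [sq_re_sub_sq_im_eq hs]
  have : (θ * p) ^ 2 < (s.re * s.im) ^ 2 := by
    rw [mul_pow, mul_pow]
    calc θ ^ 2 * p ^ 2 ≤ s.im ^ 2 * p ^ 2 := by gcongr
      _ < s.re ^ 2 * s.im ^ 2 := by nlinarith [sq_nonneg θ]
  rw [re_mul_im_eq hs] at this
  exact lt_irrefl _ this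

theorem eq_mul_I_iff_of_sq_eq (hp : |p| ≤ a) (hθ : 0 < θ) (him : 0 ≤ s.im)
    (hs : s ^ 2 = ((a ^ 2 - θ ^ 2 : ℝ) : ℂ) + 2 * (θ : ℂ) * (p : ℝ) * Complex.I) :
    s = θ * Complex.I ↔ a = 0 := by
  constructor
  · rintro rfl
    have h : -θ ^ 2 = a ^ 2 - θ ^ 2 := by simpa using sq_re_sub_sq_im_eq hs
    exact (pow_eq_zero_iff two_ne_zero).1 (by linarith)
  · rintro rfl
    obtain rfl : p = 0 := abs_nonpos_iff.1 hp
    have hsq : s ^ 2 = (θ * Complex.I) ^ 2 := by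
      rw [hs, mul_pow, Complex.I_sq]
      push_cast
      ring
    refine (sq_eq_sq_iff_eq_or_eq_neg.1 hsq).resolve_right fun h ↦ ?_
    have him' : s.im = -θ := by simpa using congrArg Complex.im h
    linarith

end SqEq

theorem re_Gcoth_ge_general (m : ℕ) (lam zhat : EuclideanSpace ℝ (Fin m))
    (θ : ℝ) (hθ0 : 0 < θ) (hθπ : θ < π) (hzhat : ‖zhat‖ = 1) (s : ℂ)
    (hs : s ^ 2 = ((‖lam‖ ^ 2 - θ ^ 2 : ℝ) : ℂ) + 2 * (θ : ℂ) * (⟪lam, zhat⟫ : ℝ) * Complex.I)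
    (him : 0 ≤ s.im) :
    θ * (Real.cos θ / Real.sin θ) ≤ (Gcoth s).re ∧
    ((Gcoth s).re = θ * (Real.cos θ / Real.sin θ) ↔ lam = 0) := by
  have hp : |⟪lam, zhat⟫| ≤ ‖lam‖ := by simpa [hzhat] using abs_real_inner_le_norm lam zhat
  have himθ := (abs_le.1 (abs_im_le_of_sq_eq hp hθ0.le hs)).2
  rw [← norm_eq_zero, ← eq_mul_I_iff_of_sq_eq hp hθ0 him hs]
  by_cases h : s = θ * Complex.I
  · simp [h, Gcoth_ofReal_mul_I_re hθ0.ne']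
  · have hlt := mul_cot_lt_Gcoth_re hθ0 hθπ him himθ h
    exact ⟨hlt.le, iff_of_false hlt.ne' h⟩

/-- Let λ ∈ ℝ^m, θ ∈ (0,π), ẑ a unit vector, and s ∈ ℂ with
s² = (λ+iθẑ)·(λ+iθẑ) = |λ|² − θ² + 2iθ(λ·ẑ) and Im s ≥ 0.  Then
Re(G(s)) ≥ θ cot θ, with equality iff λ = 0. -/
theorem re_Gcoth_ge (m : ℕ) (hm : 1 ≤ m) (lam zhat : EuclideanSpace ℝ (Fin m))
    (θ : ℝ) (hθ0 : 0 < θ) (hθπ : θ < π) (hzhat : ‖zhat‖ = 1) (s : ℂ)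
    (hs : s ^ 2 = ((‖lam‖ ^ 2 - θ ^ 2 : ℝ) : ℂ) + 2 * (θ : ℂ) * (⟪lam, zhat⟫ : ℝ) * Complex.I)
    (him : 0 ≤ s.im) :
    θ * (Real.cos θ / Real.sin θ) ≤ (Gcoth s).re ∧
    ((Gcoth s).re = θ * (Real.cos θ / Real.sin θ) ↔ lam = 0) :=
  re_Gcoth_ge_general m lam zhat θ hθ0 hθπ hzhat s hs him
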